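/- With C^w_{u,v} defined as the number of triangular puzzles with border labels u (left, clockwise), v (right, clockwise), and w (bottom, counter-clockwise), one has C^w_{𝟎,u} = δ_{u,w} for all 012-strings u, w for Fl(a,b;n), where 𝟎 = (0^a, 1^{b−a}, 2^{n−b}). -/

import Mathlib

/-- The eight puzzle pieces, as clockwise triples of edge labels. -/
def puzzleBase : List (ℕ × ℕ × ℕ) :=
  [(0,0,0),(1,1,1),(2,2,2),(3,1,0),(4,2,1),(5,2,0),(6,2,3),(7,4,0)]

/-- Cyclic rotation of a triple (rotating the triangle). -/
def rot3 (t : ℕ × ℕ × ℕ) : ℕ × ℕ × ℕ := (t.2.2, t.1, t.2.1)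

/-- A triple of labels, read clockwise, is an allowed puzzle piece (rotations allowed). -/
def IsPiece (t : ℕ × ℕ × ℕ) : Prop :=
  t ∈ puzzleBase ∨ rot3 t ∈ puzzleBase ∨ rot3 (rot3 t) ∈ puzzleBase

/-- A triangular puzzle of size n: upward triangles (i,j) for j ≤ i < n with edges
(L i j, R i j, B i j) and downward triangles with clockwise edges
(B (i-1) j, L i (j+1), R i j) for j < i < n. -/
def IsTriPuzzle (n : ℕ) (L R B : ℕ → ℕ → ℕ) : Prop :=
  (∀ i j, j ≤ i → i < n → IsPiece (L i j, R i j, B i j)) ∧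
  (∀ i j, j < i → i < n → IsPiece (B (i-1) j, L i (j+1), R i j))

/-- The left border read clockwise (bottom-to-top). -/
def triLeftCW (n : ℕ) (L : ℕ → ℕ → ℕ) : List ℕ :=
  List.ofFn (fun i : Fin n => L (n - 1 - (i : ℕ)) 0)

/-- The right border read clockwise (top-to-bottom). -/
def triRightCW (n : ℕ) (R : ℕ → ℕ → ℕ) : List ℕ :=
  List.ofFn (fun i : Fin n => R (i : ℕ) (i : ℕ))

/-- The bottom border read counter-clockwise (left-to-right). -/
def triBottomCCW (n : ℕ) (B : ℕ → ℕ → ℕ) : List ℕ :=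
  List.ofFn (fun j : Fin n => B (n - 1) (j : ℕ))

/-- Normalization: all labels outside the domain are 0 (so that puzzles can be counted). -/
def TriNormalized (n : ℕ) (L R B : ℕ → ℕ → ℕ) : Prop :=
  ∀ i j, ¬(j ≤ i ∧ i < n) → L i j = 0 ∧ R i j = 0 ∧ B i j = 0

/-- C^w_{u,v}: the number of triangular puzzles with left border u (clockwise),
right border v (clockwise) and bottom border w (counter-clockwise). -/
noncomputable def puzzleCount (n : ℕ) (u v w : List ℕ) : ℕ :=
  Set.ncard { T : (ℕ → ℕ → ℕ) × (ℕ → ℕ → ℕ) × (ℕ → ℕ → ℕ) |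
    IsTriPuzzle n T.1 T.2.1 T.2.2 ∧ TriNormalized n T.1 T.2.1 T.2.2 ∧
    triLeftCW n T.1 = u ∧ triRightCW n T.2.1 = v ∧ triBottomCCW n T.2.2 = w }

/-- The identity 012-string 𝟎 = (0^a, 1^{b-a}, 2^{n-b}) for Fl(a,b;n). -/
def idString (a b n : ℕ) : List ℕ :=
  List.replicate a 0 ++ List.replicate (b - a) 1 ++ List.replicate (n - b) 2

/-- A 012-string for the flag variety Fl(a,b;n). -/
def Is012For (a b n : ℕ) (u : List ℕ) : Prop :=
  u.length = n ∧ u.count 0 = a ∧ u.count 1 = b - a ∧ u.count 2 = n - b ∧ ∀ x ∈ u, x ≤ 2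

/-! Column `j` of the puzzle is the strip of triangles parallel to the left side that runs from the
`j`-th edge of the right border down to the `j`-th edge of the bottom border. In the puzzle we
construct, the labels crossing column `j` from the left are the letters of `u_j u_{j+1} ⋯ u_{n-1}`,
sorted as 2s, then 1s, then 0s from top to bottom; the strip inserts the letter `u_j`, entering on
the right border, into the sorted word of `u_{j+1} ⋯ u_{n-1}`, and it leaves at the bottom
unchanged. For `j = 0` the crossing labels are the left border, which is thus the sorted word `𝟎`.
Conversely, given the left border `𝟎` and the right border `u`, the pieces of each column are forced
from the top down, column after column starting from the left. -/

-- The composite labels 3, 4, 5 of the pieces (3,1,0), (4,2,1), (5,2,0), where the lines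
-- labelled `lo < hi` cross.
def pairLabel (lo hi : ℕ) : ℕ := if lo = 1 then 4 else if hi = 2 then 5 else 3

def upRight (l v : ℕ) : ℕ := if l < v then pairLabel l v else v

def upBottom (l v : ℕ) : ℕ := if v < l then pairLabel v l else v

lemma upRight_of_le {l v : ℕ} (h : v ≤ l) : upRight l v = v := if_neg (by omega)

lemma upBottom_of_le {l v : ℕ} (h : l ≤ v) : upBottom l v = v := if_neg (by omega)

lemma count_one_add_count_two_le_length (t : List ℕ) : t.count 1 + t.count 2 ≤ t.length := by
  induction t with
  | nil => simp
  | cons x t ih => simp only [List.count_cons, List.length_cons, beq_iff_eq]; split_ifs <;> omega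

lemma count_add_count_add_count_eq_length {u : List ℕ} (hu : ∀ x ∈ u, x ≤ 2) :
    u.count 0 + u.count 1 + u.count 2 = u.length := by
  induction u with
  | nil => simp
  | cons x t ih =>
    have hx := hu x List.mem_cons_self
    have := ih fun y hy => hu y (List.mem_cons_of_mem x hy)
    simp only [List.count_cons, List.length_cons, beq_iff_eq]
    split_ifs <;> omega

def columnLabel (u : List ℕ) (m : ℕ) : ℕ :=
  if m < u.count 2 then 2 else if m < u.count 2 + u.count 1 then 1 else 0

lemma columnLabel_le_two (u : List ℕ) (m : ℕ) : columnLabel u m ≤ 2 := by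
  unfold columnLabel; split_ifs <;> omega

lemma columnLabel_succ_le (u : List ℕ) (m : ℕ) : columnLabel u (m + 1) ≤ columnLabel u m := by
  unfold columnLabel; split_ifs <;> omega

lemma columnLabel_succ_ne_zero {u : List ℕ} {m : ℕ} (h1 : 1 ∈ u) (h2 : columnLabel u m = 2) :
    columnLabel u (m + 1) ≠ 0 := by
  have := List.count_pos_iff.mpr h1
  unfold columnLabel at *; split_ifs at * <;> omega

lemma le_columnLabel_cons_zero {v : ℕ} (hv : v ≤ 2) (t : List ℕ) : v ≤ columnLabel (v :: t) 0 := by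
  unfold columnLabel
  simp only [List.count_cons, beq_iff_eq]
  split_ifs <;> omega

lemma columnLabel_cons_length_le (v : ℕ) (t : List ℕ) : columnLabel (v :: t) t.length ≤ v := by
  have h := count_one_add_count_two_le_length t
  have h2 := List.count_le_length (a := 2) (l := t)
  unfold columnLabel
  simp only [List.count_cons, beq_iff_eq]
  split_ifs <;> omega

instance : DecidablePred IsPiece := fun t => by
  unfold IsPiece; infer_instance

lemma isPiece_up {l v : ℕ} (hl : l ≤ 2) (hv : v ≤ 2) : IsPiece (l, upRight l v, upBottom l v) := by
  interval_cases l <;> interval_cases v <;> decide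

lemma isPiece_down {v : ℕ} (hv : v ≤ 2) (t : List ℕ) (k : ℕ) :
    IsPiece (upBottom (columnLabel (v :: t) k) v, columnLabel t k,
      upRight (columnLabel (v :: t) (k + 1)) v) := by
  interval_cases v <;> simp only [columnLabel, List.count_cons] <;> norm_num <;>
    split_ifs <;> first | omega | decide

lemma IsPiece.unique_snd {x y y' z : ℕ} (h : IsPiece (x, y, z)) (h' : IsPiece (x, y', z)) :
    y = y' := by
  simp only [IsPiece, puzzleBase, rot3, List.mem_cons, List.not_mem_nil, or_false,
    Prod.mk.injEq] at h h'
  omega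

lemma IsPiece.unique_thd {x y z z' : ℕ} (h : IsPiece (x, y, z)) (h' : IsPiece (x, y, z')) :
    z = z' := by
  simp only [IsPiece, puzzleBase, rot3, List.mem_cons, List.not_mem_nil, or_false,
    Prod.mk.injEq] at h h'
  omega

/-- Each of the two pieces sharing the edge `r` has only one other known edge; `r` is forced
because consecutive labels `lm`, `l` of a sorted column never increase, and skip the label 1 only
if the column contains no 1. -/
lemma upRight_eq_of_isPiece {lm l v r b l' : ℕ} (hl : l ≤ lm) (hlm : lm ≤ 2) (hv : v ≤ 2)
    (hgap : ¬(v = 1 ∧ lm = 2 ∧ l = 0))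
    (hup : IsPiece (l, r, b)) (hdown : IsPiece (upBottom lm v, l', r)) : r = upRight l v := by
  simp only [IsPiece, puzzleBase, rot3, List.mem_cons, List.not_mem_nil, or_false,
    Prod.mk.injEq] at hup hdown
  interval_cases v <;> interval_cases lm <;> interval_cases l <;>
    (try norm_num [upBottom, upRight, pairLabel] at hdown hgap ⊢) <;> omega

lemma upRight_columnLabel_eq_of_isPiece {v r b l' : ℕ} {t : List ℕ} {k : ℕ} (hv : v ≤ 2)
    (hup : IsPiece (columnLabel (v :: t) (k + 1), r, b))
    (hdown : IsPiece (upBottom (columnLabel (v :: t) k) v, l', r)) :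
    r = upRight (columnLabel (v :: t) (k + 1)) v := by
  refine upRight_eq_of_isPiece (columnLabel_succ_le _ _) (columnLabel_le_two _ _) hv ?_ hup hdown
  rintro ⟨rfl, h2, h0⟩
  exact columnLabel_succ_ne_zero List.mem_cons_self h2 h0

def restrictTri (n : ℕ) (f : ℕ → ℕ → ℕ) (i j : ℕ) : ℕ := if j ≤ i ∧ i < n then f i j else 0

lemma restrictTri_of_le {n : ℕ} {f : ℕ → ℕ → ℕ} {i j : ℕ} (hji : j ≤ i) (hi : i < n) :
    restrictTri n f i j = f i j := if_pos ⟨hji, hi⟩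

lemma isTriPuzzle_restrictTri {n : ℕ} {L R B : ℕ → ℕ → ℕ} (h : IsTriPuzzle n L R B) :
    IsTriPuzzle n (restrictTri n L) (restrictTri n R) (restrictTri n B) := by
  constructor
  · intro i j hji hi
    simpa only [restrictTri_of_le hji hi] using h.1 i j hji hi
  · intro i j hji hi
    simpa only [restrictTri_of_le (by omega : j ≤ i - 1) (by omega : i - 1 < n),
      restrictTri_of_le (by omega : j + 1 ≤ i) hi, restrictTri_of_le hji.le hi] using h.2 i j hji hi

lemma triNormalized_restrictTri (n : ℕ) (L R B : ℕ → ℕ → ℕ) :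
    TriNormalized n (restrictTri n L) (restrictTri n R) (restrictTri n B) :=
  fun _ _ h => ⟨if_neg h, if_neg h, if_neg h⟩

lemma eq_restrictTri {n : ℕ} {f g : ℕ → ℕ → ℕ} (hf : ∀ i j, ¬(j ≤ i ∧ i < n) → f i j = 0)
    (hfg : ∀ i j, j ≤ i → i < n → f i j = g i j) : f = restrictTri n g := by
  funext i j
  by_cases h : j ≤ i ∧ i < n
  · rw [restrictTri_of_le h.1 h.2, hfg i j h.1 h.2]
  · rw [hf i j h, restrictTri, if_neg h]

lemma triLeftCW_eq_iff {n : ℕ} {L L' : ℕ → ℕ → ℕ} :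
    triLeftCW n L = triLeftCW n L' ↔ ∀ i < n, L i 0 = L' i 0 := by
  simp only [triLeftCW, List.ofFn_inj, funext_iff, Fin.forall_iff]
  refine ⟨fun h i hi => ?_, fun h k hk => h _ (by omega)⟩
  simpa [show n - 1 - (n - 1 - i) = i by omega] using h (n - 1 - i) (by omega)

lemma triRightCW_eq_iff {n : ℕ} {R R' : ℕ → ℕ → ℕ} :
    triRightCW n R = triRightCW n R' ↔ ∀ i < n, R i i = R' i i := by
  simp only [triRightCW, List.ofFn_inj, funext_iff, Fin.forall_iff]

lemma triBottomCCW_eq_iff {n : ℕ} {B B' : ℕ → ℕ → ℕ} :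
    triBottomCCW n B = triBottomCCW n B' ↔ ∀ j < n, B (n - 1) j = B' (n - 1) j := by
  simp only [triBottomCCW, List.ofFn_inj, funext_iff, Fin.forall_iff]

def idL (u : List ℕ) (i j : ℕ) : ℕ := columnLabel (u.drop j) (i - j)

def idR (u : List ℕ) (i j : ℕ) : ℕ := upRight (idL u i j) (u.getD j 0)

def idB (u : List ℕ) (i j : ℕ) : ℕ := upBottom (idL u i j) (u.getD j 0)

lemma drop_eq_getD_cons {u : List ℕ} {j : ℕ} (hj : j < u.length) :
    u.drop j = u.getD j 0 :: u.drop (j + 1) := by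
  rw [List.getD_eq_getElem u 0 hj]
  exact List.drop_eq_getElem_cons hj

lemma getD_le_two {u : List ℕ} (hu : ∀ x ∈ u, x ≤ 2) {j : ℕ} (hj : j < u.length) :
    u.getD j 0 ≤ 2 := by
  rw [List.getD_eq_getElem u 0 hj]
  exact hu _ (List.getElem_mem hj)

lemma isTriPuzzle_idL_idR_idB {u : List ℕ} (hu : ∀ x ∈ u, x ≤ 2) :
    IsTriPuzzle u.length (idL u) (idR u) (idB u) := by
  constructor
  · intro i j _ hi
    exact isPiece_up (columnLabel_le_two _ _) (getD_le_two hu (by omega))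
  · intro i j hji hi
    obtain ⟨k, rfl⟩ : ∃ k, i = j + 1 + k := ⟨i - (j + 1), by omega⟩
    have hk : j + 1 + k - 1 = j + k := by omega
    simp only [idL, idR, idB, hk, drop_eq_getD_cons (show j < u.length by omega),
      show j + 1 + k - (j + 1) = k by omega, show j + k - j = k by omega,
      show j + 1 + k - j = k + 1 by omega]
    exact isPiece_down (getD_le_two hu (by omega)) _ _

lemma triRightCW_idR {u : List ℕ} (hu : ∀ x ∈ u, x ≤ 2) : triRightCW u.length (idR u) = u := by
  refine List.ext_getElem (by simp [triRightCW]) fun i hi _ => ?_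
  have hi : i < u.length := by simpa [triRightCW] using hi
  simp only [triRightCW, List.getElem_ofFn, idR, idL, Nat.sub_self, drop_eq_getD_cons hi]
  rw [upRight_of_le (le_columnLabel_cons_zero (getD_le_two hu hi) _),
    List.getD_eq_getElem u 0 hi]

lemma triBottomCCW_idB (u : List ℕ) : triBottomCCW u.length (idB u) = u := by
  refine List.ext_getElem (by simp [triBottomCCW]) fun j hj _ => ?_
  have hj : j < u.length := by simpa [triBottomCCW] using hj
  have hlen : u.length - 1 - j = (u.drop (j + 1)).length := by simp; omega
  simp only [triBottomCCW, List.getElem_ofFn, idB, idL, drop_eq_getD_cons hj, hlen]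
  rw [upBottom_of_le (columnLabel_cons_length_le _ _), List.getD_eq_getElem u 0 hj]

def sortedWord (u : List ℕ) : List ℕ :=
  List.replicate (u.count 0) 0 ++ List.replicate (u.count 1) 1 ++ List.replicate (u.count 2) 2

lemma getElem_sortedWord {u : List ℕ} {k : ℕ} (hk : k < (sortedWord u).length) :
    (sortedWord u)[k] =
      if k < u.count 0 then 0 else if k < u.count 0 + u.count 1 then 1 else 2 := by
  simp only [sortedWord, List.getElem_append, List.length_append, List.length_replicate,
    List.getElem_replicate]
  split_ifs <;> omega

lemma triLeftCW_idL {u : List ℕ} (hu : ∀ x ∈ u, x ≤ 2) :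
    triLeftCW u.length (idL u) = sortedWord u := by
  have hsum := count_add_count_add_count_eq_length hu
  refine List.ext_getElem (by simp [triLeftCW, sortedWord]; omega) fun k hk _ => ?_
  have hk : k < u.length := by simpa [triLeftCW] using hk
  simp only [triLeftCW, List.getElem_ofFn, idL, columnLabel, List.drop_zero, Nat.sub_zero,
    getElem_sortedWord]
  split_ifs <;> omega

section Uniqueness

variable {u : List ℕ} {L R B : ℕ → ℕ → ℕ}

lemma bottom_eq_idB (hu : ∀ x ∈ u, x ≤ 2) (hP : IsTriPuzzle u.length L R B) {i j : ℕ}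
    (hji : j ≤ i) (hi : i < u.length) (hL : L i j = idL u i j) (hR : R i j = idR u i j) :
    B i j = idB u i j := by
  have hup := hP.1 i j hji hi
  rw [hL, hR] at hup
  exact hup.unique_thd ((isTriPuzzle_idL_idR_idB hu).1 i j hji hi)

lemma left_eq_idL_succ (hu : ∀ x ∈ u, x ≤ 2) (hP : IsTriPuzzle u.length L R B) {j : ℕ}
    (hR : ∀ i, j ≤ i → i < u.length → R i j = idR u i j)
    (hB : ∀ i, j ≤ i → i < u.length → B i j = idB u i j) :
    ∀ i, j + 1 ≤ i → i < u.length → L i (j + 1) = idL u i (j + 1) := by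
  intro i hji hi
  have hdown := hP.2 i j (by omega) hi
  rw [hB (i - 1) (by omega) (by omega), hR i (by omega) hi] at hdown
  exact hdown.unique_snd ((isTriPuzzle_idL_idR_idB hu).2 i j (by omega) hi)

lemma column_eq_id (hu : ∀ x ∈ u, x ≤ 2) (hP : IsTriPuzzle u.length L R B) {j : ℕ}
    (hL : ∀ i, j ≤ i → i < u.length → L i j = idL u i j)
    (hright : ∀ i < u.length, R i i = idR u i i) :
    ∀ i, j ≤ i → i < u.length → R i j = idR u i j ∧ B i j = idB u i j := by
  intro i hji
  induction i, hji using Nat.le_induction with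
  | base =>
    intro hj
    exact ⟨hright j hj, bottom_eq_idB hu hP le_rfl hj (hL j le_rfl hj) (hright j hj)⟩
  | succ i hji ih =>
    intro hi
    have hj : j < u.length := by omega
    have hup := hP.1 (i + 1) j (by omega) hi
    have hdown := hP.2 (i + 1) j (by omega) hi
    rw [hL (i + 1) (by omega) hi] at hup
    rw [Nat.add_sub_cancel, (ih (by omega)).2] at hdown
    have hR : R (i + 1) j = idR u (i + 1) j := by
      simp only [idL, idR, idB, drop_eq_getD_cons hj, show i + 1 - j = i - j + 1 by omega]
        at hup hdown ⊢
      exact upRight_columnLabel_eq_of_isPiece (getD_le_two hu hj) hup hdown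
    exact ⟨hR, bottom_eq_idB hu hP (by omega) hi (hL (i + 1) (by omega) hi) hR⟩

lemma eq_id_of_borders (hu : ∀ x ∈ u, x ≤ 2) (hP : IsTriPuzzle u.length L R B)
    (hleft : ∀ i < u.length, L i 0 = idL u i 0) (hright : ∀ i < u.length, R i i = idR u i i) :
    ∀ j i, j ≤ i → i < u.length → L i j = idL u i j ∧ R i j = idR u i j ∧ B i j = idB u i j := by
  intro j
  induction j with
  | zero =>
    intro i _ hi
    exact ⟨hleft i hi, column_eq_id hu hP (fun i _ hi => hleft i hi) hright i (Nat.zero_le _) hi⟩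
  | succ j ih =>
    have hL := left_eq_idL_succ hu hP (fun i h hi => (ih i h hi).2.1)
      (fun i h hi => (ih i h hi).2.2)
    exact fun i hji hi => ⟨hL i hji hi, column_eq_id hu hP hL hright i hji hi⟩

end Uniqueness

def idPuzzle (u : List ℕ) : (ℕ → ℕ → ℕ) × (ℕ → ℕ → ℕ) × (ℕ → ℕ → ℕ) :=
  (restrictTri u.length (idL u), restrictTri u.length (idR u), restrictTri u.length (idB u))

lemma idPuzzle_spec {u : List ℕ} (hu : ∀ x ∈ u, x ≤ 2) :
    IsTriPuzzle u.length (idPuzzle u).1 (idPuzzle u).2.1 (idPuzzle u).2.2 ∧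
    TriNormalized u.length (idPuzzle u).1 (idPuzzle u).2.1 (idPuzzle u).2.2 ∧
    triLeftCW u.length (idPuzzle u).1 = sortedWord u ∧
    triRightCW u.length (idPuzzle u).2.1 = u ∧ triBottomCCW u.length (idPuzzle u).2.2 = u := by
  refine ⟨isTriPuzzle_restrictTri (isTriPuzzle_idL_idR_idB hu), triNormalized_restrictTri _ _ _ _,
    ?_, ?_, ?_⟩
  · rw [← triLeftCW_idL hu, triLeftCW_eq_iff]
    exact fun i hi => restrictTri_of_le (Nat.zero_le i) hi
  · conv_rhs => rw [← triRightCW_idR hu]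
    exact triRightCW_eq_iff.mpr fun i hi => restrictTri_of_le le_rfl hi
  · conv_rhs => rw [← triBottomCCW_idB u]
    exact triBottomCCW_eq_iff.mpr fun j hj => restrictTri_of_le (by omega) (by omega)

lemma eq_idPuzzle {u : List ℕ} (hu : ∀ x ∈ u, x ≤ 2) {L R B : ℕ → ℕ → ℕ}
    (hP : IsTriPuzzle u.length L R B) (hN : TriNormalized u.length L R B)
    (hleft : triLeftCW u.length L = sortedWord u) (hright : triRightCW u.length R = u) :
    (L, R, B) = idPuzzle u := by
  have h := eq_id_of_borders hu hP
    (triLeftCW_eq_iff.mp (hleft.trans (triLeftCW_idL hu).symm))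
    (triRightCW_eq_iff.mp (hright.trans (triRightCW_idR hu).symm))
  simp only [idPuzzle, Prod.mk.injEq]
  exact ⟨eq_restrictTri (fun i j hij => (hN i j hij).1) fun i j h1 h2 => (h j i h1 h2).1,
    eq_restrictTri (fun i j hij => (hN i j hij).2.1) fun i j h1 h2 => (h j i h1 h2).2.1,
    eq_restrictTri (fun i j hij => (hN i j hij).2.2) fun i j h1 h2 => (h j i h1 h2).2.2⟩

theorem puzzleCount_sortedWord {u : List ℕ} (hu : ∀ x ∈ u, x ≤ 2) (w : List ℕ) :
    puzzleCount u.length (sortedWord u) u w = if u = w then 1 else 0 := by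
  rw [puzzleCount]
  split_ifs with huw
  · subst huw
    refine Set.ncard_eq_one.mpr ⟨idPuzzle u, Set.eq_singleton_iff_unique_mem.mpr
      ⟨idPuzzle_spec hu, fun T ⟨hP, hN, hleft, hright, _⟩ => eq_idPuzzle hu hP hN hleft hright⟩⟩
  · refine (congrArg Set.ncard (Set.eq_empty_of_forall_notMem ?_)).trans (Set.ncard_empty _)
    rintro T ⟨hP, hN, hleft, hright, hbottom⟩
    have h : T = idPuzzle u := eq_idPuzzle hu hP hN hleft hright
    rw [h, (idPuzzle_spec hu).2.2.2.2] at hbottom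
    exact huw hbottom

theorem puzzleCount_identity_general (n a b : ℕ)
    (u w : List ℕ) (hu : Is012For a b n u) :
    puzzleCount n (idString a b n) u w = if u = w then 1 else 0 := by
  obtain ⟨rfl, h0, h1, h2, hle⟩ := hu
  have hid : idString a b u.length = sortedWord u := by rw [sortedWord, h0, h1, h2]; rfl
  rw [hid]
  exact puzzleCount_sortedWord hle w

/-- Multiplication by one: C^w_{𝟎,u} = δ_{u,w}. -/
theorem puzzleCount_identity (n a b : ℕ) (hab : a ≤ b) (hbn : b ≤ n)
    (u w : List ℕ) (hu : Is012For a b n u) (hw : Is012For a b n w) :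
    puzzleCount n (idString a b n) u w = if u = w then 1 else 0 :=
  puzzleCount_identity_general n a b u w hu
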